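/- Let s > 0, a ∈ (0,1), and let (y_t, u_t, v_t)_{t≥0} be the unique solution of the system y' = s y(1−y)/(y+(1+s)(1−y)), u' = u/2 + (u+v)y/2 − u/(y+(1+s)(1−y)), v' = v/2 + (u+v)(1−y)/2 − (1+s)v/(y+(1+s)(1−y)) with initial condition (a, a, 0). Then as t → ∞, (y_t, u_t, v_t) converges to (1, a^{(1+s)/(2s)} (1−a)^{−1/(2s)} ∫_a^1 (1−x)^{1/(2s)} x^{−(1+s)/(2s)} (1/2 + 1/(2s(1−x))) dx, 0). -/

import Mathlib

/-!
The `y`-equation is autonomous, and once `y ≥ a` its drift lies between `s a (1 - y) / (1 + s)`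
and `s (1 - y)`; hence `y` increases, stays below `1`, and `1 - y` decays exponentially. Given
`y`, the `(u, v)`-equation is linear, and the curve `y ↦ (uval s a y, vval s a y)`, obtained by
solving it with `y` as the time variable, starts at `(a, 0)` and is tangent to the field, so by
Grönwall `(u, v)` stays on it. The limit is the value of the curve at `y = 1`, where the integral
converges because its integrand is `O((1 - x) ^ (1 / (2 s) - 1))`.
-/

open MeasureTheory Filter

/-- The drift function `g` of the dynamical system
`y' = s y(1−y)/(y+(1+s)(1−y))`,
`u' = u/2 + (u+v)y/2 − u/(y+(1+s)(1−y))`,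
`v' = v/2 + (u+v)(1−y)/2 − (1+s)v/(y+(1+s)(1−y))`. -/
noncomputable def gdrift (s : ℝ) (p : ℝ × ℝ × ℝ) : ℝ × ℝ × ℝ :=
  (s * p.1 * (1 - p.1) / (p.1 + (1 + s) * (1 - p.1)),
   p.2.1 / 2 + (p.2.1 + p.2.2) * p.1 / 2 - p.2.1 / (p.1 + (1 + s) * (1 - p.1)),
   p.2.2 / 2 + (p.2.1 + p.2.2) * (1 - p.1) / 2 -
     (1 + s) * p.2.2 / (p.1 + (1 + s) * (1 - p.1)))

/-- A solution of the dynamical system on `[0,∞)` with values in `[0,1]³` and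
initial condition `(a, a, 0)`. -/
def IsSolSys (s a : ℝ) (z : ℝ → ℝ × ℝ × ℝ) : Prop :=
  z 0 = (a, a, 0) ∧ ∀ t ∈ Set.Ici (0 : ℝ),
    z t ∈ Set.Icc (0 : ℝ) 1 ×ˢ Set.Icc (0 : ℝ) 1 ×ˢ Set.Icc (0 : ℝ) 1 ∧
    HasDerivWithinAt z (gdrift s (z t)) (Set.Ici 0) t

/-- The integral `∫_a^y (1−x)^{1/(2s)} x^{−(1+s)/(2s)} (1/2 + 1/(2s(1−x))) dx`. -/
noncomputable def intI (s a y : ℝ) : ℝ :=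
  ∫ x in a..y, (1 - x) ^ (1 / (2 * s)) / x ^ ((1 + s) / (2 * s)) *
    (1 / 2 + 1 / (2 * s) * (1 / (1 - x)))

/-- `u` expressed as a function of `y`:
`u = y ⬝ a^{(1+s)/(2s)} (1−a)^{−1/(2s)} [(1−y)^{1/(2s)} y^{−(1+s)/(2s)} + ∫_a^y ⋯ dx]`. -/
noncomputable def uval (s a y : ℝ) : ℝ :=
  y * (a ^ ((1 + s) / (2 * s)) / (1 - a) ^ (1 / (2 * s))) *
    ((1 - y) ^ (1 / (2 * s)) / y ^ ((1 + s) / (2 * s)) + intI s a y)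

/-- `v` expressed as a function of `y`:
`v = (1−y) ⬝ a^{(1+s)/(2s)} (1−a)^{−1/(2s)} ∫_a^y ⋯ dx`. -/
noncomputable def vval (s a y : ℝ) : ℝ :=
  (1 - y) * (a ^ ((1 + s) / (2 * s)) / (1 - a) ^ (1 / (2 * s))) * intI s a y

open Set Topology

noncomputable def ydrift (s y : ℝ) : ℝ :=
  s * y * (1 - y) / (y + (1 + s) * (1 - y))

noncomputable def uvField (s y : ℝ) (p : ℝ × ℝ) : ℝ × ℝ :=
  (p.1 / 2 + (p.1 + p.2) * y / 2 - p.1 / (y + (1 + s) * (1 - y)),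
   p.2 / 2 + (p.1 + p.2) * (1 - y) / 2 - (1 + s) * p.2 / (y + (1 + s) * (1 - y)))

section Drift

variable {s y : ℝ}

lemma one_le_drift_denom (hs : 0 ≤ s) (hy : y ≤ 1) : 1 ≤ y + (1 + s) * (1 - y) := by
  nlinarith

lemma drift_denom_le (hs : 0 ≤ s) (hy : 0 ≤ y) : y + (1 + s) * (1 - y) ≤ 1 + s := by
  nlinarith

lemma ydrift_nonneg (hs : 0 ≤ s) (hy : y ∈ Icc 0 1) : 0 ≤ ydrift s y := by
  have := one_le_drift_denom hs hy.2
  have := hy.1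
  have : 0 ≤ 1 - y := sub_nonneg.2 hy.2
  unfold ydrift
  positivity

lemma ydrift_le (hs : 0 ≤ s) (hy : y ∈ Icc 0 1) : ydrift s y ≤ s * (1 - y) := by
  have hD := one_le_drift_denom hs hy.2
  rw [ydrift, div_le_iff₀ (by linarith)]
  have : 0 ≤ s * (1 - y) := mul_nonneg hs (sub_nonneg.2 hy.2)
  nlinarith [hy.2]

lemma le_ydrift {a : ℝ} (hs : 0 ≤ s) (hy : y ∈ Icc 0 1) (hay : a ≤ y) :
    s * a / (1 + s) * (1 - y) ≤ ydrift s y := by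
  have hD1 := one_le_drift_denom hs hy.2
  have hDs := drift_denom_le hs hy.1
  rw [ydrift, div_mul_eq_mul_div, div_le_div_iff₀ (by linarith) (by linarith)]
  have h1 : 0 ≤ s * (1 - y) := mul_nonneg hs (sub_nonneg.2 hy.2)
  have h2 : a * (y + (1 + s) * (1 - y)) ≤ y * (1 + s) := by nlinarith [hy.1]
  nlinarith [mul_le_mul_of_nonneg_left h2 h1]

lemma uvField_sub (p q : ℝ × ℝ) : uvField s y (p - q) = uvField s y p - uvField s y q := by
  simp only [uvField, Prod.fst_sub, Prod.snd_sub, Prod.mk_sub_mk]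
  congr 1 <;> ring

lemma abs_mul_fst_add_mul_snd_le (α β : ℝ) (p : ℝ × ℝ) :
    |α * p.1 + β * p.2| ≤ (|α| + |β|) * ‖p‖ :=
  calc |α * p.1 + β * p.2| ≤ |α| * ‖p.1‖ + |β| * ‖p.2‖ := by
        simpa only [abs_mul, Real.norm_eq_abs] using abs_add_le (α * p.1) (β * p.2)
    _ ≤ |α| * ‖p‖ + |β| * ‖p‖ := by gcongr; exacts [norm_fst_le p, norm_snd_le p]
    _ = (|α| + |β|) * ‖p‖ := by ring

lemma norm_uvField_le (hs : 0 ≤ s) (hy : y ∈ Icc 0 1) (p : ℝ × ℝ) :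
    ‖uvField s y p‖ ≤ (2 + s) * ‖p‖ := by
  set D := y + (1 + s) * (1 - y) with hD
  have hD1 : 1 ≤ D := one_le_drift_denom hs hy.2
  have hDs : D ≤ 1 + s := drift_denom_le hs hy.1
  have hinv : 1 / D ≤ 1 := (div_le_one (by linarith)).2 hD1
  have hinv' : 1 ≤ (1 + s) / D := (one_le_div (by linarith)).2 hDs
  have hinv'' : (1 + s) / D ≤ 1 + s := div_le_self (by linarith) hD1
  have hpos : 0 < 1 / D := by positivity
  have hy1 := hy.1
  have hy2 := hy.2
  rw [norm_prod_le_iff]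
  constructor
  · calc ‖(uvField s y p).1‖ = |(1 / 2 + y / 2 - 1 / D) * p.1 + y / 2 * p.2| := by
          rw [Real.norm_eq_abs, uvField, ← hD]; congr 1; ring
      _ ≤ (|1 / 2 + y / 2 - 1 / D| + |y / 2|) * ‖p‖ := abs_mul_fst_add_mul_snd_le _ _ p
      _ ≤ (2 + s) * ‖p‖ := by
          gcongr ?_ * _
          have : |1 / 2 + y / 2 - 1 / D| ≤ 1 := abs_le.2 ⟨by linarith, by linarith⟩
          rw [abs_of_nonneg (by linarith : 0 ≤ y / 2)]
          linarith
  · calc ‖(uvField s y p).2‖ =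
          |(1 - y) / 2 * p.1 + (1 / 2 + (1 - y) / 2 - (1 + s) / D) * p.2| := by
          rw [Real.norm_eq_abs, uvField, ← hD]; congr 1; ring
      _ ≤ (|(1 - y) / 2| + |1 / 2 + (1 - y) / 2 - (1 + s) / D|) * ‖p‖ :=
          abs_mul_fst_add_mul_snd_le _ _ p
      _ ≤ (2 + s) * ‖p‖ := by
          gcongr ?_ * _
          rw [abs_of_nonneg (by linarith : 0 ≤ (1 - y) / 2),
            abs_of_nonpos (by linarith : 1 / 2 + (1 - y) / 2 - (1 + s) / D ≤ 0)]
          linarith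

end Drift

lemma Convex.monotoneOn_of_hasDerivWithinAt_nonneg {D : Set ℝ} (hD : Convex ℝ D)
    {f f' : ℝ → ℝ} (hf : ∀ t ∈ D, HasDerivWithinAt f (f' t) D t) (hf' : ∀ t ∈ D, 0 ≤ f' t) :
    MonotoneOn f D :=
  _root_.monotoneOn_of_hasDerivWithinAt_nonneg hD (fun t ht => (hf t ht).continuousWithinAt)
    (fun t ht => (hf t (interior_subset ht)).mono interior_subset)
    (fun t ht => hf' t (interior_subset ht))

lemma Convex.monotoneOn_mul_exp {D : Set ℝ} (hD : Convex ℝ D) {f f' : ℝ → ℝ}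
    {c : ℝ} (hf : ∀ t ∈ D, HasDerivWithinAt f (f' t) D t) (hf' : ∀ t ∈ D, 0 ≤ f' t + c * f t) :
    MonotoneOn (fun t => f t * Real.exp (c * t)) D := by
  refine hD.monotoneOn_of_hasDerivWithinAt_nonneg
    (f' := fun t => (f' t + c * f t) * Real.exp (c * t)) (fun t ht => ?_)
    (fun t ht => mul_nonneg (hf' t ht) (Real.exp_pos _).le)
  have hexp : HasDerivWithinAt (fun t => Real.exp (c * t)) (Real.exp (c * t) * c) D t :=
    ((hasDerivAt_id t).const_mul c).exp.hasDerivWithinAt.congr_deriv (by simp)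
  exact ((hf t ht).mul hexp).congr_deriv (by ring)

def IsSolFst (s a : ℝ) (y : ℝ → ℝ) : Prop :=
  y 0 = a ∧ ∀ t ∈ Ici (0 : ℝ), y t ∈ Icc 0 1 ∧ HasDerivWithinAt y (ydrift s (y t)) (Ici 0) t

lemma IsSolSys.fst {s a : ℝ} {z : ℝ → ℝ × ℝ × ℝ} (hz : IsSolSys s a z) :
    IsSolFst s a (fun t => (z t).1) :=
  ⟨show (z 0).1 = a by rw [hz.1], fun t ht => ⟨(hz.2 t ht).1.1,
    (ContinuousLinearMap.fst ℝ ℝ (ℝ × ℝ)).hasFDerivAt.comp_hasDerivWithinAt t (hz.2 t ht).2⟩⟩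

namespace IsSolFst

variable {s a : ℝ} {y : ℝ → ℝ}

lemma initial_le (hs : 0 ≤ s) (hy : IsSolFst s a y) {t : ℝ} (ht : 0 ≤ t) : a ≤ y t := by
  have hmono : MonotoneOn y (Ici 0) :=
    (convex_Ici 0).monotoneOn_of_hasDerivWithinAt_nonneg (fun t ht => (hy.2 t ht).2)
      (fun t ht => ydrift_nonneg hs (hy.2 t ht).1)
  simpa only [hy.1] using hmono self_mem_Ici ht ht

/-- `1 - y` decays at most like `exp (-s t)`, so it never reaches `0`. -/
lemma lt_one (hs : 0 ≤ s) (ha : a < 1) (hy : IsSolFst s a y) {t : ℝ} (ht : 0 ≤ t) :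
    y t < 1 := by
  have hmono : MonotoneOn (fun t => (1 - y t) * Real.exp (s * t)) (Ici 0) :=
    (convex_Ici 0).monotoneOn_mul_exp
      (fun t ht => ((hy.2 t ht).2.const_sub 1))
      (fun t ht => by linarith [ydrift_le hs (hy.2 t ht).1])
  have h := hmono self_mem_Ici ht ht
  simp only [hy.1, mul_zero, Real.exp_zero, mul_one] at h
  by_contra! h1
  nlinarith [Real.exp_pos (s * t)]

/-- Once `y ≥ a`, the drift is at least `c (1 - y)` with `c = s a / (1 + s)`, so `1 - y` decays
exponentially. -/
lemma tendsto_one (hs : 0 < s) (ha : 0 < a) (hy : IsSolFst s a y) :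
    Tendsto y atTop (𝓝 1) := by
  set c := s * a / (1 + s)
  have hc : 0 < c := by positivity
  have hmono : MonotoneOn (fun t => (y t - 1) * Real.exp (c * t)) (Ici 0) :=
    (convex_Ici 0).monotoneOn_mul_exp (fun t ht => (hy.2 t ht).2.sub_const 1)
      (fun t ht => by linarith [le_ydrift hs.le (hy.2 t ht).1 (hy.initial_le hs.le ht)])
  have hbound : ∀ t ∈ Ici (0 : ℝ), 1 - y t ≤ (1 - a) * Real.exp (-(c * t)) := by
    intro t ht
    have h := hmono self_mem_Ici ht ht
    simp only [hy.1, mul_zero, Real.exp_zero, mul_one] at h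
    rw [Real.exp_neg, ← div_eq_mul_inv, le_div_iff₀ (Real.exp_pos _)]
    linarith
  have hdecay : Tendsto (fun t => (1 - a) * Real.exp (-(c * t))) atTop (𝓝 0) := by
    simpa using (Real.tendsto_exp_neg_atTop_nhds_zero.comp
      (tendsto_id.const_mul_atTop hc)).const_mul (1 - a)
  have hgap : Tendsto (fun t => 1 - y t) atTop (𝓝 0) :=
    tendsto_of_tendsto_of_tendsto_of_le_of_le' tendsto_const_nhds hdecay
      (eventually_ge_atTop 0 |>.mono fun t ht => sub_nonneg.2 (hy.2 t ht).1.2)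
      (eventually_ge_atTop 0 |>.mono hbound)
  simpa using hgap.const_sub 1

end IsSolFst

noncomputable def weight (s y : ℝ) : ℝ :=
  (1 - y) ^ (1 / (2 * s)) / y ^ ((1 + s) / (2 * s))

noncomputable def intIntegrand (s x : ℝ) : ℝ :=
  weight s x * (1 / 2 + 1 / (2 * s) * (1 / (1 - x)))

noncomputable def uvCurve (s a y : ℝ) : ℝ × ℝ :=
  (uval s a y, vval s a y)

section Curve

variable {s a : ℝ}

lemma uvCurve_eq (s a : ℝ) : uvCurve s a =
    fun y => (y * (weight s a)⁻¹ * (weight s y + intI s a y), (1 - y) * (weight s a)⁻¹ * intI s a y) := by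
  ext y <;> simp only [uvCurve, uval, vval, weight, inv_div]

lemma continuousOn_weight (s : ℝ) : ContinuousOn (weight s) (Ioo 0 1) :=
  ((continuousOn_const.sub continuousOn_id).rpow_const fun _ hx => Or.inl (sub_pos.2 hx.2).ne').div
    (continuousOn_id.rpow_const fun _ hx => Or.inl hx.1.ne')
    fun _ hx => (Real.rpow_pos_of_pos hx.1 _).ne'

lemma continuousOn_intIntegrand (s : ℝ) : ContinuousOn (intIntegrand s) (Ioo 0 1) :=
  (continuousOn_weight s).mul <| continuousOn_const.add <| continuousOn_const.mul <|
    continuousOn_const.div (continuousOn_const.sub continuousOn_id) fun _ hx =>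
      (sub_pos.2 hx.2).ne'

lemma hasDerivAt_intI (ha : a ∈ Ioo 0 1) {Y : ℝ} (hY : Y ∈ Ioo 0 1) :
    HasDerivAt (intI s a) (intIntegrand s Y) Y :=
  intervalIntegral.integral_hasDerivAt_right
    ((continuousOn_intIntegrand s).mono (ordConnected_Ioo.uIcc_subset ha hY)).intervalIntegrable
    ((continuousOn_intIntegrand s).stronglyMeasurableAtFilter isOpen_Ioo Y hY)
    ((continuousOn_intIntegrand s).continuousAt (isOpen_Ioo.mem_nhds hY))

/-- On `(a, 1)` the integrand is `weight / 2` plus `(1 - x) ^ (1 / (2 s) - 1)` times a function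
continuous on `[a, 1]`. -/
lemma intervalIntegrable_intIntegrand (hs : 0 < s) (ha : a ∈ Ioo 0 1) :
    IntervalIntegrable (intIntegrand s) volume a 1 := by
  have hα : 0 < 1 / (2 * s) := by positivity
  have hpos : ∀ x ∈ uIcc a 1, 0 < x := fun x hx => by
    rw [uIcc_of_le ha.2.le] at hx; exact ha.1.trans_le hx.1
  have hsing : IntervalIntegrable (fun x : ℝ => (1 - x) ^ (1 / (2 * s) - 1)) volume a 1 := by
    simpa using ((intervalIntegral.intervalIntegrable_rpow' (a := 1 - a) (b := 0)
      (r := 1 / (2 * s) - 1) (by linarith)).comp_sub_left 1)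
  have hcont : ContinuousOn (fun x : ℝ => 1 / (2 * s) / x ^ ((1 + s) / (2 * s))) (uIcc a 1) :=
    continuousOn_const.div (continuousOn_id.rpow_const fun x hx => Or.inl (hpos x hx).ne')
      fun x hx => (Real.rpow_pos_of_pos (hpos x hx) _).ne'
  have hweight : ContinuousOn (fun x => weight s x * (1 / 2)) (uIcc a 1) :=
    (((continuousOn_const.sub continuousOn_id).rpow_const fun _ _ => Or.inr hα.le).div
      (continuousOn_id.rpow_const fun x hx => Or.inl (hpos x hx).ne')
      fun x hx => (Real.rpow_pos_of_pos (hpos x hx) _).ne').mul continuousOn_const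
  have hsum := hweight.intervalIntegrable.add (hsing.mul_continuousOn hcont)
  rw [intervalIntegrable_iff_integrableOn_Ioo_of_le ha.2.le] at hsum ⊢
  refine hsum.congr_fun (fun x hx => ?_) measurableSet_Ioo
  have hx0 : 0 < x := ha.1.trans hx.1
  have hx1 : 0 < 1 - x := by linarith [hx.2]
  have : x ^ ((1 + s) / (2 * s)) ≠ 0 := (Real.rpow_pos_of_pos hx0 _).ne'
  simp only [intIntegrand, weight]
  rw [Real.rpow_sub hx1, Real.rpow_one]
  field_simp

lemma continuousWithinAt_intI (hs : 0 < s) (ha : a ∈ Ioo 0 1) :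
    ContinuousWithinAt (intI s a) (Icc a 1) 1 := by
  have h := intervalIntegral.continuousOn_primitive_interval'
    (intervalIntegrable_intIntegrand hs ha) left_mem_uIcc
  rw [uIcc_of_le ha.2.le] at h
  exact h 1 (right_mem_Icc.2 ha.2.le)

lemma hasDerivAt_weight {Y : ℝ} (hY : Y ∈ Ioo 0 1) :
    HasDerivAt (weight s)
      (weight s Y * (-(1 / (2 * s)) / (1 - Y) - (1 + s) / (2 * s) / Y)) Y := by
  have hY0 : 0 < Y := hY.1
  have hY1 : 0 < 1 - Y := by linarith [hY.2]
  have hnum : HasDerivAt (fun y : ℝ => (1 - y) ^ (1 / (2 * s)))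
      (1 / (2 * s) * (1 - Y) ^ (1 / (2 * s) - 1) * (-1)) Y :=
    (Real.hasDerivAt_rpow_const (Or.inl hY1.ne')).comp Y ((hasDerivAt_id Y).const_sub 1)
  have hden : HasDerivAt (fun y : ℝ => y ^ ((1 + s) / (2 * s)))
      ((1 + s) / (2 * s) * Y ^ ((1 + s) / (2 * s) - 1)) Y :=
    Real.hasDerivAt_rpow_const (Or.inl hY0.ne')
  have hB : Y ^ ((1 + s) / (2 * s)) ≠ 0 := (Real.rpow_pos_of_pos hY0 _).ne'
  refine (hnum.div hden hB).congr_deriv ?_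
  rw [Real.rpow_sub hY1, Real.rpow_sub hY0, Real.rpow_one, Real.rpow_one, weight]
  field_simp

lemma hasDerivAt_uvCurve (hs : 0 < s) (ha : a ∈ Ioo 0 1) {Y : ℝ} (hY : Y ∈ Ioo 0 1) :
    ∃ d, HasDerivAt (uvCurve s a) d Y ∧ ydrift s Y • d = uvField s Y (uvCurve s a Y) := by
  have hw := hasDerivAt_weight (s := s) hY
  have hI := hasDerivAt_intI (s := s) ha hY
  have hu := ((hasDerivAt_id' Y).mul_const (weight s a)⁻¹).mul (hw.add hI)
  have hv := (((hasDerivAt_id' Y).const_sub 1).mul_const (weight s a)⁻¹).mul hI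
  rw [uvCurve_eq]
  refine ⟨_, hu.prodMk hv, ?_⟩
  have hY0 : 0 < Y := hY.1
  have hY1 : 0 < 1 - Y := by linarith [hY.2]
  have hD : 0 < Y + (1 + s) * (1 - Y) := by nlinarith
  have hs0 : s ≠ 0 := hs.ne'
  simp only [uvField, ydrift, intIntegrand, Pi.add_apply, Prod.smul_mk, smul_eq_mul]
  generalize (weight s a)⁻¹ = c
  congr 1 <;> field_simp <;> ring

lemma hasDerivWithinAt_uvCurve_comp (hs : 0 < s) (ha : a ∈ Ioo 0 1) {y : ℝ → ℝ} {S : Set ℝ}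
    {t : ℝ} (hyt : y t ∈ Ioo 0 1) (hy : HasDerivWithinAt y (ydrift s (y t)) S t) :
    HasDerivWithinAt (fun τ => uvCurve s a (y τ)) (uvField s (y t) (uvCurve s a (y t))) S t := by
  obtain ⟨d, hd, hdrift⟩ := hasDerivAt_uvCurve hs ha hyt
  exact hdrift ▸ hd.scomp_hasDerivWithinAt t hy

lemma uvCurve_self (ha : a ∈ Ioo 0 1) : uvCurve s a a = (a, 0) := by
  have hA : (1 - a) ^ (1 / (2 * s)) ≠ 0 := (Real.rpow_pos_of_pos (by linarith [ha.2]) _).ne'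
  have hB : a ^ ((1 + s) / (2 * s)) ≠ 0 := (Real.rpow_pos_of_pos ha.1 _).ne'
  have hw : weight s a ≠ 0 := div_ne_zero hA hB
  simp only [uvCurve_eq, intI, intervalIntegral.integral_same, add_zero, mul_zero]
  field_simp

lemma uvCurve_one (hs : 0 < s) : uvCurve s a 1 =
    (a ^ ((1 + s) / (2 * s)) / (1 - a) ^ (1 / (2 * s)) * intI s a 1, 0) := by
  rw [uvCurve, uval, vval, sub_self, Real.zero_rpow (by positivity)]
  simp

lemma tendsto_uvCurve_one (hs : 0 < s) (ha : a ∈ Ioo 0 1) :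
    Tendsto (uvCurve s a) (𝓝[Icc a 1] 1)
      (𝓝 (a ^ ((1 + s) / (2 * s)) / (1 - a) ^ (1 / (2 * s)) * intI s a 1, 0)) := by
  have hweight : ContinuousAt (weight s) 1 :=
    ((Real.continuousAt_rpow_const _ _ (Or.inr (by positivity))).comp
      (continuous_const.sub continuous_id).continuousAt).div
      (Real.continuousAt_rpow_const _ _ (Or.inl one_ne_zero)) (by simp)
  have hI := continuousWithinAt_intI hs ha
  have hcurve : ContinuousWithinAt (uvCurve s a) (Icc a 1) 1 := by
    rw [uvCurve_eq]
    exact ((continuousWithinAt_id.mul continuousWithinAt_const).mul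
      (hweight.continuousWithinAt.add hI)).prodMk
      (((continuousWithinAt_const.sub continuousWithinAt_id).mul continuousWithinAt_const).mul hI)
  rw [← uvCurve_one hs]
  exact hcurve.tendsto

end Curve

lemma IsSolSys.snd_eq_uvCurve {s a : ℝ} {z : ℝ → ℝ × ℝ × ℝ} (hs : 0 < s) (ha : a ∈ Ioo 0 1)
    (hz : IsSolSys s a z) {T : ℝ} (hT : 0 ≤ T) : (z T).2 = uvCurve s a (z T).1 := by
  have hy := hz.fst
  have hyIoo : ∀ t ∈ Ici (0 : ℝ), (z t).1 ∈ Ioo 0 1 := fun t ht =>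
    ⟨ha.1.trans_le (hy.initial_le hs.le ht), hy.lt_one hs.le ha.2 ht⟩
  set e : ℝ → ℝ × ℝ := fun t => (z t).2 - uvCurve s a (z t).1
  -- The `(u, v)`-equation is linear, so the gap `e` between the solution and the curve solves it.
  have he : ∀ t ∈ Ici (0 : ℝ), HasDerivWithinAt e (uvField s (z t).1 (e t)) (Ici 0) t := by
    intro t ht
    rw [uvField_sub]
    exact ((ContinuousLinearMap.snd ℝ ℝ (ℝ × ℝ)).hasFDerivAt.comp_hasDerivWithinAt t
      (hz.2 t ht).2).sub (hasDerivWithinAt_uvCurve_comp hs ha (hyIoo t ht) (hy.2 t ht).2)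
  have hgap := eq_zero_of_abs_deriv_le_mul_abs_self_of_eq_zero_right (K := 2 + s)
    (fun t ht => (he t ht.1).continuousWithinAt.mono fun τ hτ => hτ.1)
    (fun t ht => (he t ht.1).mono (Ici_subset_Ici.2 ht.1))
    (by simp [e, hz.1, uvCurve_self ha])
    (fun t ht => norm_uvField_le hs.le (Ioo_subset_Icc_self (hyIoo t ht.1)) _) T ⟨hT, le_rfl⟩
  exact sub_eq_zero.1 hgap

/-- The solution of the dynamical system started from `(a, a, 0)` converges, as
`t → ∞`, to `(1, a^{(1+s)/(2s)} (1−a)^{−1/(2s)} ∫_a^1 (1−x)^{1/(2s)} x^{−(1+s)/(2s)}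
(1/2 + 1/(2s(1−x))) dx, 0)`. -/
theorem dynamical_system_limit_at_infinity
    (s a : ℝ) (hs : 0 < s) (ha : a ∈ Set.Ioo (0 : ℝ) 1)
    (z : ℝ → ℝ × ℝ × ℝ) (hz : IsSolSys s a z) :
    Tendsto z atTop
      (nhds (1, a ^ ((1 + s) / (2 * s)) / (1 - a) ^ (1 / (2 * s)) * intI s a 1, 0)) := by
  have hy := hz.fst
  have hy1 : Tendsto (fun t => (z t).1) atTop (𝓝 1) := hy.tendsto_one hs ha.1
  have hyIcc : ∀ᶠ t in atTop, (z t).1 ∈ Icc a 1 :=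
    (eventually_ge_atTop 0).mono fun t ht => ⟨hy.initial_le hs.le ht, (hy.2 t ht).1.2⟩
  have huv : Tendsto (fun t => (z t).2) atTop
      (𝓝 (a ^ ((1 + s) / (2 * s)) / (1 - a) ^ (1 / (2 * s)) * intI s a 1, 0)) :=
    ((tendsto_uvCurve_one hs ha).comp (tendsto_nhdsWithin_iff.2 ⟨hy1, hyIcc⟩)).congr'
      ((eventually_ge_atTop 0).mono fun t ht => (hz.snd_eq_uvCurve hs ha ht).symm)
  exact hy1.prodMk_nhds huv
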